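/- Let H_m = F_m + F_{m−7} + F_{m−12} + F_{m−19} for integers m ≥ 21. Then lim_{m→∞} A(H_m)/H_m^λ = (45573/262144)·(√5/(1 + φ^{−7} + φ^{−12} + φ^{−19}))^λ. -/

import Mathlib

/-!
A set of Fibonacci numbers with sum at most `B < F (k + 1)` is a subset of `{F 2, …, F k}`.
Splitting on its largest element, and using that all of `{F 2, …, F k}` sums to `F (k + 2) - 2`,
gives `A (F (k + 4) + b) = 2 ^ (k + 1) + A (F (k + 2) + b) + A b` when `b < F (k + 1)`, and
`A (F (k + 4) + b) = 3 * 2 ^ k + 2 * A b` when `F (k + 1) ≤ b < F (k + 2)`. The gaps `7, 5, 7`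
between the indices of `H (j + 21) = F (j + 21) + F (j + 14) + F (j + 9) + F (j + 2)` are odd, so
iterating these two steps gives `A (H (j + 21)) = 364552 * 2 ^ j + 48 * A (F (j + 2))`, and
`12 * A (F k) = 2 ^ (k + 1) + 6 k + 3 + (-1) ^ k`. Thus `A (H m) ~ (45573 / 262144) 2 ^ m`.
On the other hand, Binet's formula gives `H m ~ c φ ^ m / √5` with `c = 1 + φ⁻⁷ + φ⁻¹² + φ⁻¹⁹`,
and `(φ ^ m) ^ λ = 2 ^ m`.
-/

open scoped BigOperators
open Filter Topology

/-- A natural number is a Fibonacci number, i.e. equals `F m` for some `m ≥ 1`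
(with `F 1 = F 2 = 1`). -/
def IsFibNum (x : ℕ) : Prop := ∃ m : ℕ, 0 < m ∧ Nat.fib m = x

/-- `R n` counts the partitions of `n` into distinct Fibonacci numbers:
the number of finite sets of Fibonacci numbers with sum `n` (so `R 0 = 1`). -/
noncomputable def R (n : ℕ) : ℕ :=
  Nat.card {S : Finset ℕ // (∀ x ∈ S, IsFibNum x) ∧ (∑ x ∈ S, x) = n}

/-- The summatory function `A H = ∑_{n=0}^{H} R n`. -/
noncomputable def A (H : ℕ) : ℕ := ∑ n ∈ Finset.range (H + 1), R n

section FibonacciPartitions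

open Finset Nat

def fibsUpTo (k : ℕ) : Finset ℕ := (Icc 2 k).image fib

def countSumLE (k B : ℕ) : ℕ := #{S ∈ (fibsUpTo k).powerset | ∑ x ∈ S, x ≤ B}

lemma mem_fibsUpTo {k x : ℕ} : x ∈ fibsUpTo k ↔ ∃ i, 2 ≤ i ∧ i ≤ k ∧ fib i = x := by
  simp [fibsUpTo, and_assoc]

lemma fib_succ_notMem_fibsUpTo (k : ℕ) : fib (k + 1) ∉ fibsUpTo k := by
  rw [mem_fibsUpTo]
  rintro ⟨i, hi, hik, hfib⟩
  exact ((fib_lt_fib hi).2 (by omega)).ne hfib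

lemma fibsUpTo_succ {k : ℕ} (hk : 1 ≤ k) :
    fibsUpTo (k + 1) = insert (fib (k + 1)) (fibsUpTo k) := by
  rw [fibsUpTo, ← insert_Icc_right_eq_Icc_add_one (by omega), image_insert, fibsUpTo]

lemma card_fibsUpTo (k : ℕ) : #(fibsUpTo k) = k - 1 := by
  rw [fibsUpTo, Finset.card_image_of_injOn, card_Icc]
  · omega
  · exact fib_strictMonoOn.injOn.mono fun i hi => (mem_Icc.1 hi).1

lemma sum_fibsUpTo_add_two {k : ℕ} (hk : 1 ≤ k) :
    ∑ x ∈ fibsUpTo k, x + 2 = fib (k + 2) := by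
  induction k, hk using Nat.le_induction with
  | base => rfl
  | succ k hk ih =>
    have hfib : fib (k + 1 + 2) = fib (k + 1) + fib (k + 2) := fib_add_two
    rw [fibsUpTo_succ hk, sum_insert (fib_succ_notMem_fibsUpTo k)]
    omega

lemma countSumLE_succ {k B : ℕ} (hk : 1 ≤ k) (hB : fib (k + 1) ≤ B) :
    countSumLE (k + 1) B = countSumLE k B + countSumLE k (B - fib (k + 1)) := by
  have hnot := fib_succ_notMem_fibsUpTo k
  simp only [countSumLE, card_filter, fibsUpTo_succ hk, sum_powerset_insert hnot]
  congr 1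
  refine sum_congr rfl fun S hS => ?_
  rw [sum_insert fun h => hnot (mem_powerset.1 hS h)]
  congr 1
  exact propext (by omega)

lemma countSumLE_eq_two_pow {k B : ℕ} (hB : fib (k + 3) ≤ B + 2) :
    countSumLE (k + 1) B = 2 ^ k := by
  rw [countSumLE, filter_true_of_mem, card_powerset, card_fibsUpTo, Nat.add_sub_cancel]
  intro S hS
  have := sum_le_sum_of_subset (f := id) (mem_powerset.1 hS)
  have : ∑ x ∈ fibsUpTo (k + 1), x + 2 = fib (k + 3) :=
    sum_fibsUpTo_add_two (Nat.le_add_left 1 k)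
  simp only [id] at *
  omega

lemma isFibNum_iff_mem_fibsUpTo {k x : ℕ} (hk : 2 ≤ k) (hx : x < fib (k + 1)) :
    IsFibNum x ↔ x ∈ fibsUpTo k := by
  rw [mem_fibsUpTo]
  constructor
  · rintro ⟨m, hm, rfl⟩
    obtain rfl | hm := (Nat.succ_le_of_lt hm).eq_or_lt
    · exact ⟨2, le_rfl, hk, rfl⟩
    · exact ⟨m, hm, Nat.lt_succ_iff.1 ((fib_lt_fib hm).1 hx), rfl⟩
  · rintro ⟨i, hi, -, rfl⟩
    exact ⟨i, by omega, rfl⟩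

lemma R_eq_card {k n : ℕ} (hk : 2 ≤ k) (hn : n < fib (k + 1)) :
    R n = #{S ∈ (fibsUpTo k).powerset | ∑ x ∈ S, x = n} := by
  have hmem : ∀ S : Finset ℕ, ((∀ x ∈ S, IsFibNum x) ∧ ∑ x ∈ S, x = n) ↔
      S ∈ {S ∈ (fibsUpTo k).powerset | ∑ x ∈ S, x = n} := by
    intro S
    rw [mem_filter, mem_powerset]
    refine and_congr_left fun hsum => forall₂_congr fun x hx => isFibNum_iff_mem_fibsUpTo hk ?_
    exact (hsum ▸ single_le_sum (fun _ _ => Nat.zero_le _) hx).trans_lt hn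
  rw [R, Nat.card_congr (Equiv.subtypeEquivRight hmem), Nat.card_eq_fintype_card,
    Fintype.card_coe]

lemma A_eq_countSumLE {k B : ℕ} (hk : 2 ≤ k) (hB : B < fib (k + 1)) : A B = countSumLE k B := by
  rw [A, countSumLE, card_eq_sum_card_fiberwise (f := fun S => ∑ x ∈ S, x) (t := range (B + 1))]
  · refine sum_congr rfl fun n hn => ?_
    rw [mem_range] at hn
    rw [R_eq_card hk (by omega), filter_filter]
    exact congrArg card (filter_congr fun S _ => by constructor <;> intro h <;> omega)
  · intro S hS
    simpa [Nat.lt_succ_iff] using (mem_filter.1 hS).2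

lemma A_zero : A 0 = 1 := by
  rw [A_eq_countSumLE (k := 2) le_rfl (by decide)]
  decide

lemma A_one : A 1 = 2 := by
  rw [A_eq_countSumLE (k := 2) le_rfl (by decide)]
  decide

lemma A_two : A 2 = 3 := by
  rw [A_eq_countSumLE (k := 3) (by norm_num) (by decide)]
  decide

lemma A_fib_add_four_add {k b : ℕ} (hb : b < fib (k + 3)) :
    A (fib (k + 4) + b) = 2 ^ (k + 1) + countSumLE (k + 2) (fib (k + 2) + b) + A b := by
  have h3 : fib (k + 3) = fib (k + 1) + fib (k + 2) := fib_add_two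
  have h4 : fib (k + 4) = fib (k + 2) + fib (k + 3) := fib_add_two
  have h5 : fib (k + 5) = fib (k + 3) + fib (k + 4) := fib_add_two
  rw [A_eq_countSumLE (k := k + 4) ?_ ?_, countSumLE_succ (k := k + 3) ?_ ?_,
    countSumLE_succ (k := k + 2) ?_ ?_, countSumLE_eq_two_pow (k := k + 1) ?_,
    A_eq_countSumLE (k := k + 3) ?_ ?_, show fib (k + 4) + b - fib (k + 4) = b by omega,
    show fib (k + 4) + b - fib (k + 3) = fib (k + 2) + b by omega]
  all_goals grind

lemma A_fib_add_four_add_of_lt {k b : ℕ} (hb : b < fib (k + 1)) :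
    A (fib (k + 4) + b) = 2 ^ (k + 1) + A (fib (k + 2) + b) + A b := by
  have h3 : fib (k + 3) = fib (k + 1) + fib (k + 2) := fib_add_two
  rw [A_fib_add_four_add (by omega),
    A_eq_countSumLE (k := k + 2) (B := fib (k + 2) + b) (by omega) (by grind)]

lemma two_mul_A_fib_add_three_add {t b : ℕ} (ht : 2 ≤ t) (hb : fib t ≤ b)
    (hb' : b < fib (t + 1)) :
    2 * A (fib (t + 3) + b) = 3 * 2 ^ t + 4 * A b := by
  obtain ⟨k, rfl⟩ : ∃ k, t = k + 1 := ⟨t - 1, by omega⟩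
  have h3 : fib (k + 3) = fib (k + 1) + fib (k + 2) := fib_add_two
  rw [A_fib_add_four_add (by grind), countSumLE_succ (k := k + 1) (by omega) (by grind),
    countSumLE_eq_two_pow (by grind), Nat.add_sub_cancel_left,
    ← A_eq_countSumLE (k := k + 1) (by omega) hb']
  ring

lemma six_mul_A_fib_add_odd_add {t b : ℕ} (ht : 2 ≤ t) (hb : fib t ≤ b)
    (hb' : b < fib (t + 1)) (r : ℕ) :
    6 * A (fib (t + 2 * r + 3) + b) = 2 ^ (t + 2 * r + 3) + 2 ^ t + 6 * (r + 2) * A b := by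
  induction r with
  | zero =>
    have := two_mul_A_fib_add_three_add ht hb hb'
    rw [pow_add]
    grind
  | succ r ih =>
    have hmono : fib (t + 1) ≤ fib (t + 2 * r + 2) := fib_mono (by omega)
    rw [show t + 2 * (r + 1) + 3 = t + 2 * r + 1 + 4 by ring,
      A_fib_add_four_add_of_lt (by grind)]
    grind

lemma A_fib_eq {k : ℕ} (hk : 2 ≤ k) :
    (A (fib k) : ℝ) = (2 ^ (k + 1) + 6 * k + 3 + (-1) ^ k) / 12 := by
  obtain ⟨n, rfl⟩ : ∃ n, k = n + 2 := ⟨k - 2, by omega⟩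
  clear hk
  induction n using Nat.twoStepInduction with
  | zero => norm_num [A_one]
  | one => norm_num [A_two]
  | more n ih _ =>
    have := A_fib_add_four_add_of_lt (k := n) (b := 0) (fib_pos.2 (by omega))
    simp only [add_zero, A_zero] at this
    rw [this]
    push_cast at ih ⊢
    linear_combination ih

def exampleH (m : ℕ) : ℕ := fib m + fib (m - 7) + fib (m - 12) + fib (m - 19)

lemma A_exampleH_add_21 (j : ℕ) :
    A (exampleH (j + 21)) = 364552 * 2 ^ j + 48 * A (fib (j + 2)) := by
  change A (fib (j + 21) + fib (j + 14) + fib (j + 9) + fib (j + 2)) = _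
  have h2 : fib (j + 2) < fib (j + 3) := fib_lt_fib_succ (by omega)
  have h8 : fib (j + 2) < fib (j + 8) := fib_lt_fib (by omega) |>.2 (by omega)
  have h13 : fib (j + 10) ≤ fib (j + 13) := fib_mono (by omega)
  have h10 : fib (j + 10) = fib (j + 8) + fib (j + 9) := fib_add_two
  have h15 : fib (j + 15) = fib (j + 13) + fib (j + 14) := fib_add_two
  have e1 : 6 * A (fib (j + 9) + fib (j + 2)) =
      2 ^ (j + 9) + 2 ^ (j + 2) + 24 * A (fib (j + 2)) :=
    six_mul_A_fib_add_odd_add (r := 2) (by omega) le_rfl h2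
  have e2 : 6 * A (fib (j + 14) + (fib (j + 9) + fib (j + 2))) =
      2 ^ (j + 14) + 2 ^ (j + 9) + 18 * A (fib (j + 9) + fib (j + 2)) :=
    six_mul_A_fib_add_odd_add (r := 1) (by omega) le_self_add (by grind)
  have e3 : 6 * A (fib (j + 21) + (fib (j + 14) + (fib (j + 9) + fib (j + 2)))) =
      2 ^ (j + 21) + 2 ^ (j + 14) + 24 * A (fib (j + 14) + (fib (j + 9) + fib (j + 2))) :=
    six_mul_A_fib_add_odd_add (r := 2) (by omega) le_self_add (by grind)
  simp only [add_assoc, pow_add] at *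
  omega

lemma tendsto_A_fib_div_two_pow :
    Tendsto (fun k => (A (fib k) : ℝ) / 2 ^ k) atTop (𝓝 (1 / 6)) := by
  have hlin := tendsto_pow_const_div_const_pow_of_one_lt 1 (one_lt_two (α := ℝ))
  have hhalf :=
    tendsto_pow_atTop_nhds_zero_of_lt_one (r := (1 / 2 : ℝ)) (by norm_num) (by norm_num)
  have hneg :=
    tendsto_pow_atTop_nhds_zero_of_abs_lt_one (r := (-1 / 2 : ℝ)) (by norm_num [abs_div])
  have hlim := (((hlin.const_mul (1 / 2)).add (hhalf.const_mul (1 / 4))).add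
    (hneg.const_mul (1 / 12))).const_add (1 / 6)
  simp only [mul_zero, add_zero] at hlim
  refine hlim.congr' ((eventually_ge_atTop 2).mono fun k hk => ?_)
  dsimp only
  rw [A_fib_eq hk, div_pow, div_pow, pow_one]
  field_simp
  ring

lemma tendsto_A_exampleH_div_two_pow :
    Tendsto (fun m => (A (exampleH m) : ℝ) / 2 ^ m) atTop (𝓝 (45573 / 262144)) := by
  rw [← tendsto_add_atTop_iff_nat 21]
  have hfib := ((tendsto_add_atTop_iff_nat 2).2 tendsto_A_fib_div_two_pow).const_mul (3 / 32768)
    |>.const_add (364552 / 2097152)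
  convert hfib using 2 with j
  · rw [A_exampleH_add_21]
    push_cast
    field_simp
    ring
  · norm_num

end FibonacciPartitions

section GoldenRatio

open Real
open Nat (fib)
open scoped goldenRatio

lemma tendsto_fib_div_goldenRatio_pow :
    Tendsto (fun n => (fib n : ℝ) / φ ^ n) atTop (𝓝 (1 / √5)) := by
  have h n : (fib n : ℝ) / φ ^ n = (1 - (ψ / φ) ^ n) / √5 := by
    rw [coe_fib_eq, div_pow ψ]
    field
  have hratio := tendsto_pow_atTop_nhds_zero_of_abs_lt_one (r := ψ / φ) <| by
    rw [abs_div, div_lt_one <| by positivity, abs_of_pos goldenRatio_pos, abs_lt]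
    ring_nf
    bound
  rw [funext h, show 1 / √5 = (1 - 0) / √5 by ring]
  exact (hratio.const_sub 1).div_const _

lemma tendsto_fib_sub_div_goldenRatio_pow (d : ℕ) :
    Tendsto (fun n => (fib (n - d) : ℝ) / φ ^ n) atTop (𝓝 (φ ^ (-(d : ℤ)) / √5)) := by
  have hshift := (tendsto_fib_div_goldenRatio_pow.comp (tendsto_sub_atTop_nat d)).mul_const
    (φ ^ (-(d : ℤ)))
  rw [one_div_mul_eq_div] at hshift
  refine hshift.congr' ((eventually_ge_atTop d).mono fun n hn => ?_)
  obtain ⟨k, rfl⟩ := Nat.exists_eq_add_of_le' hn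
  simp only [Function.comp_apply, Nat.add_sub_cancel, pow_add, zpow_neg, zpow_natCast]
  field_simp

lemma tendsto_exampleH_div_goldenRatio_pow :
    Tendsto (fun m => (exampleH m : ℝ) / φ ^ m)
      atTop (𝓝 ((1 + φ ^ (-7 : ℤ) + φ ^ (-12 : ℤ) + φ ^ (-19 : ℤ)) / √5)) := by
  convert (((tendsto_fib_sub_div_goldenRatio_pow 0).add (tendsto_fib_sub_div_goldenRatio_pow 7)).add
    (tendsto_fib_sub_div_goldenRatio_pow 12)).add (tendsto_fib_sub_div_goldenRatio_pow 19)
    using 2 with m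
  · simp only [exampleH, Nat.sub_zero, Nat.cast_add, add_div]
  · simp only [Nat.cast_zero, neg_zero, zpow_zero, Nat.cast_ofNat, add_div]

end GoldenRatio

lemma pow_rpow_log_div_log {x : ℝ} (hx : 0 < x) (hx1 : x ≠ 1) (m : ℕ) :
    (x ^ m) ^ (Real.log 2 / Real.log x) = 2 ^ m := by
  rw [← Real.rpow_natCast_mul hx.le, mul_comm, Real.rpow_mul_natCast hx.le, Real.log_div_log,
    Real.rpow_logb hx hx1 two_pos]

/-- Example with `H_m = F_m + F_{m-7} + F_{m-12} + F_{m-19}`. -/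
theorem summatory_example_asymptotic (φ lam : ℝ)
    (hφ : φ = (1 + Real.sqrt 5) / 2)
    (hlam : lam = Real.log 2 / Real.log φ)
    (Hm : ℕ → ℕ)
    (hHm : ∀ m : ℕ, 21 ≤ m →
      Hm m = Nat.fib m + Nat.fib (m - 7) + Nat.fib (m - 12) + Nat.fib (m - 19)) :
    Tendsto (fun m : ℕ => (A (Hm m) : ℝ) / ((Hm m : ℕ) : ℝ) ^ lam) atTop
      (𝓝 ((45573 / 262144) *
        (Real.sqrt 5 / (1 + φ ^ (-7 : ℤ) + φ ^ (-12 : ℤ) + φ ^ (-19 : ℤ))) ^ lam)) := by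
  obtain rfl : φ = Real.goldenRatio := hφ
  have hHm' := (eventually_ge_atTop 21).mono hHm
  have hA : Tendsto (fun m => (A (Hm m) : ℝ) / 2 ^ m) atTop _ :=
    tendsto_A_exampleH_div_two_pow.congr' (hHm'.mono fun m hm => by simp only [hm, exampleH])
  have hH : Tendsto (fun m => (Hm m : ℝ) / Real.goldenRatio ^ m) atTop _ :=
    tendsto_exampleH_div_goldenRatio_pow.congr' (hHm'.mono fun m hm => by simp only [hm, exampleH])
  have hc : 0 < (1 + Real.goldenRatio ^ (-7 : ℤ) + Real.goldenRatio ^ (-12 : ℤ) +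
      Real.goldenRatio ^ (-19 : ℤ)) / √5 := by positivity
  convert hA.div (hH.rpow_const (p := lam) (Or.inl hc.ne')) (Real.rpow_pos_of_pos hc _).ne'
    using 2 with m
  · rw [Pi.div_apply, Real.div_rpow (Nat.cast_nonneg _) (by positivity), hlam,
      pow_rpow_log_div_log Real.goldenRatio_pos Real.one_lt_goldenRatio.ne',
      div_div_div_cancel_right₀ (by positivity)]
  · rw [div_eq_mul_inv _ (_ ^ lam), ← Real.inv_rpow hc.le, inv_div]
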